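/- Poisson kernel bounds for the 1D band model (second part of Lemma B.1): Fix integers W ≥ 1 and r ≥ 1, fix ξ ∈ ℤ, let B_r(ξ) = { x ∈ ℤ : |x−ξ| ≤ rW }, let −Δ_W^{B_r} be the matrix on ℝ^{B_r(ξ)} given by (−Δ_W^{B_r} f)(x) = 2W·f(x) − Σ_{y∈B_r(ξ): 0<|x−y|≤W} f(y), and let G_r = (−Δ_W^{B_r})^{-1}. For x in the exterior boundary ∂B_r(ξ) = { x ∈ ℤ : rW < |x−ξ| ≤ (r+1)W }, define the Poisson kernel P_r(ξ,x) = Σ_{y∈B_r(ξ): 0<|x−y|≤W} G_r(ξ,y). Then for every x ∈ ∂B_r(ξ): 1/(2W³) ≤ P_r(ξ,x) ≤ 1. -/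

import Mathlib

/-!
The Green function `G = M⁻¹` of `M = -Δ_W^B` is entrywise nonnegative by a minimum principle:
at the leftmost minimiser of a function vanishing off `B` the left neighbour is strictly larger,
so a negative minimum would make the Laplacian negative there.

Upper bound: `(M 1)(y)` counts the neighbours of `y` outside `B`, so it is at least `1` when
`y ∼ x ∉ B`, and `P_r(ξ,x) ≤ ∑_y G(ξ,y) (M 1)(y) = 1`.

Lower bound: `v = (rW + 1 - |· - ξ|)⁺ + W(W-1) δ_ξ` is `≥ 1` on the ball and `M v ≤ 2W³ δ_ξ`.
The kink of the tent at `ξ` gives Laplacian at most `W(W-1)` at the neighbours of `ξ`, which the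
spike cancels. Comparison gives `G(·,ξ) ≥ v / (2W³)`, and `x` is adjacent to the point of the
ball nearest to it.
-/

namespace Band1D

/-- The ball `B_r(ξ) = {x : |x - ξ| ≤ rW}` in the band graph `Γ_{1,W}`. -/
noncomputable def bandBall (ξ : ℤ) (r W : ℕ) : Finset ℤ :=
  Finset.Icc (ξ - (r * W : ℕ)) (ξ + (r * W : ℕ))

/-- The (negative) Dirichlet Laplacian `-Δ_W^{B_r}` of the 1D band graph on `B_r(ξ)`,
as a matrix: `2W` on the diagonal and `-1` at `(x,y)` with `0 < |x-y| ≤ W`. -/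
def bandMat (ξ : ℤ) (r W : ℕ) : Matrix (bandBall ξ r W) (bandBall ξ r W) ℝ :=
  fun x y =>
    (if (x : ℤ) = (y : ℤ) then (2 * W : ℝ) else 0) -
      (if 0 < |(x : ℤ) - (y : ℤ)| ∧ |(x : ℤ) - (y : ℤ)| ≤ (W : ℤ) then 1 else 0)

/-- The center `ξ` as an element of `B_r(ξ)`. -/
def bandCtr (ξ : ℤ) (r W : ℕ) : (bandBall ξ r W : Finset ℤ) :=
  ⟨ξ, by simp only [bandBall, Finset.mem_Icc]; omega⟩

/-- The Poisson kernel `P_r(ξ,x) = Σ_{y ∈ B_r(ξ), 0 < |x-y| ≤ W} G_r(ξ,y)` of the 1D band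
model, defined for `x` in the exterior boundary of `B_r(ξ)`. -/
noncomputable def bandPoisson (ξ : ℤ) (r W : ℕ) (x : ℤ) : ℝ :=
  ∑ y : (bandBall ξ r W : Finset ℤ),
    if 0 < |x - (y : ℤ)| ∧ |x - (y : ℤ)| ≤ (W : ℤ) then
      (bandMat ξ r W)⁻¹ (bandCtr ξ r W) y
    else 0

open Finset Matrix

noncomputable section

def ball (ξ : ℤ) (R : ℕ) : Finset ℤ := Icc (ξ - R) (ξ + R)

theorem mem_ball {ξ z : ℤ} {R : ℕ} : z ∈ ball ξ R ↔ |z - ξ| ≤ R := by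
  rw [ball, mem_Icc, abs_le]
  omega

def nbhd (W : ℕ) (y : ℤ) : Finset ℤ := (Icc (y - W) (y + W)).erase y

theorem mem_nbhd {W : ℕ} {y z : ℤ} : z ∈ nbhd W y ↔ 0 < |z - y| ∧ |z - y| ≤ W := by
  simp only [nbhd, mem_erase, mem_Icc, abs_eq_max_neg]
  omega

theorem card_nbhd (W : ℕ) (y : ℤ) : #(nbhd W y) = 2 * W := by
  rw [nbhd, card_erase_of_mem (by simp), Int.card_Icc]
  omega

theorem sum_nbhd_succ {M : Type*} [AddCommMonoid M] (W : ℕ) (y : ℤ) (f : ℤ → M) :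
    ∑ z ∈ nbhd (W + 1) y, f z = ∑ z ∈ nbhd W y, f z + f (y + (W + 1)) + f (y - (W + 1)) := by
  have hsplit : nbhd (W + 1) y = insert (y + (W + 1)) (insert (y - (W + 1)) (nbhd W y)) := by
    ext z
    simp only [mem_insert, mem_nbhd, abs_eq_max_neg]
    push_cast
    omega
  rw [hsplit, sum_insert (by simp [mem_nbhd, abs_eq_max_neg]; omega),
    sum_insert (by simp [mem_nbhd, abs_eq_max_neg])]
  abel

def bandLap {G : Type*} [AddCommGroup G] (W : ℕ) (f : ℤ → G) (y : ℤ) : G :=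
  ∑ z ∈ nbhd W y, (f y - f z)

section MinimumPrinciple

variable {G : Type*} [AddCommGroup G] [LinearOrder G] [IsOrderedAddMonoid G] {W : ℕ}

theorem bandLap_neg_of_isMin (hW : 1 ≤ W) {f : ℤ → G} {y : ℤ} (hmin : ∀ z, f y ≤ f z)
    (hleft : f y < f (y - 1)) : bandLap W f y < 0 := by
  rw [bandLap, ← sum_const_zero (s := nbhd W y)]
  refine sum_lt_sum (fun z _ => sub_nonpos.2 (hmin z)) ⟨y - 1, ?_, sub_neg.2 hleft⟩
  rw [mem_nbhd]
  simp only [sub_sub_cancel_left, abs_neg, abs_one]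
  omega

theorem nonneg_of_bandLap_nonneg (hW : 1 ≤ W) {B : Finset ℤ} {f : ℤ → G}
    (hf : ∀ z ∉ B, f z = 0) (hlap : ∀ y ∈ B, 0 ≤ bandLap W f y) (z : ℤ) : 0 ≤ f z := by
  by_contra! hz
  have hzB : z ∈ B := by_contra fun h => hz.ne (hf z h)
  obtain ⟨y₁, hy₁B, hy₁⟩ := exists_min_image B f ⟨z, hzB⟩
  have hneg : f y₁ < 0 := (hy₁ z hzB).trans_lt hz
  set T := B.filter (fun y => f y = f y₁)
  have hT : T.Nonempty := ⟨y₁, mem_filter.2 ⟨hy₁B, rfl⟩⟩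
  obtain ⟨hy₀B, hy₀⟩ := mem_filter.1 (T.min'_mem hT)
  set y₀ := T.min' hT
  have hmin : ∀ w, f y₀ ≤ f w := fun w => by
    by_cases hw : w ∈ B
    · exact hy₀ ▸ hy₁ w hw
    · exact hy₀ ▸ hf w hw ▸ hneg.le
  have hleft : f y₀ < f (y₀ - 1) := by
    refine (hmin _).lt_of_ne fun h => ?_
    have hB : y₀ - 1 ∈ B := by_contra fun hn => hneg.ne (hy₀ ▸ h.trans (hf _ hn))
    have := T.min'_le _ (mem_filter.2 ⟨hB, h ▸ hy₀⟩)
    omega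
  exact (hlap y₀ hy₀B).not_gt (bandLap_neg_of_isMin hW hmin hleft)

end MinimumPrinciple

section DirichletLaplacian

variable {B : Finset ℤ} {W : ℕ}

def zeroExt {G : Type*} [Zero G] (f : B → G) (z : ℤ) : G := if h : z ∈ B then f ⟨z, h⟩ else 0

theorem zeroExt_coe {G : Type*} [Zero G] (f : B → G) (y : B) : zeroExt f y = f y := dif_pos y.2

theorem zeroExt_of_notMem {G : Type*} [Zero G] (f : B → G) {z : ℤ} (hz : z ∉ B) :
    zeroExt f z = 0 := dif_neg hz

variable (B W) in
def dirichletLap : Matrix B B ℝ :=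
  fun x y =>
    (if (x : ℤ) = (y : ℤ) then (2 * W : ℝ) else 0) -
      (if 0 < |(x : ℤ) - (y : ℤ)| ∧ |(x : ℤ) - (y : ℤ)| ≤ (W : ℤ) then 1 else 0)

theorem dirichletLap_mulVec (f : B → ℝ) (y : B) :
    (dirichletLap B W *ᵥ f) y = bandLap W (zeroExt f) y := by
  have hnbhd : ∑ z : B, (if 0 < |(y : ℤ) - z| ∧ |(y : ℤ) - z| ≤ (W : ℤ) then f z else 0) =
      ∑ z ∈ nbhd W y, zeroExt f z := by
    calc _ = ∑ z ∈ B, if z ∈ nbhd W y then zeroExt f z else 0 := by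
          rw [← sum_coe_sort B]
          refine sum_congr rfl fun z _ => ?_
          simp only [mem_nbhd, abs_sub_comm (z : ℤ), zeroExt_coe]
      _ = ∑ z ∈ nbhd W y, zeroExt f z := by
          rw [← sum_filter]
          refine sum_subset (fun z hz => (mem_filter.1 hz).2) fun z hz hzB => ?_
          exact zeroExt_of_notMem f fun h => hzB (mem_filter.2 ⟨h, hz⟩)
  simp only [mulVec, dotProduct, dirichletLap, sub_mul, ite_mul, one_mul, zero_mul,
    sum_sub_distrib, hnbhd, bandLap, sum_const, card_nbhd, zeroExt_coe, Subtype.coe_inj,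
    sum_ite_eq, mem_univ, if_true, nsmul_eq_mul]
  push_cast
  ring

theorem le_of_dirichletLap_mulVec_le (hW : 1 ≤ W) {u v : B → ℝ}
    (h : dirichletLap B W *ᵥ u ≤ dirichletLap B W *ᵥ v) : u ≤ v := by
  intro y
  have hlap : ∀ z ∈ B, 0 ≤ bandLap W (zeroExt (v - u)) z := fun z hz => by
    have := dirichletLap_mulVec (W := W) (v - u) ⟨z, hz⟩
    rw [mulVec_sub, Pi.sub_apply] at this
    exact this ▸ sub_nonneg.2 (h ⟨z, hz⟩)
  simpa [zeroExt_coe] using nonneg_of_bandLap_nonneg hW (fun z => zeroExt_of_notMem _) hlap y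

theorem isUnit_det_dirichletLap (hW : 1 ≤ W) : IsUnit (dirichletLap B W).det := by
  rw [isUnit_iff_ne_zero]
  intro h
  obtain ⟨v, hv0, hv⟩ := exists_mulVec_eq_zero_iff.2 h
  exact hv0 (le_antisymm (le_of_dirichletLap_mulVec_le hW (by rw [hv, mulVec_zero]))
    (le_of_dirichletLap_mulVec_le hW (by rw [hv, mulVec_zero])))

theorem dirichletLap_mulVec_inv_col (hW : 1 ≤ W) (j : B) :
    dirichletLap B W *ᵥ (fun i => (dirichletLap B W)⁻¹ i j) = Pi.single j 1 := by
  have hcol : (fun i => (dirichletLap B W)⁻¹ i j) = (dirichletLap B W)⁻¹ *ᵥ Pi.single j 1 := by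
    rw [mulVec_single_one]; rfl
  rw [hcol, mulVec_mulVec, mul_nonsing_inv _ (isUnit_det_dirichletLap hW), one_mulVec]

theorem dirichletLap_inv_nonneg (hW : 1 ≤ W) (i j : B) : 0 ≤ (dirichletLap B W)⁻¹ i j := by
  have := le_of_dirichletLap_mulVec_le hW (u := 0) (v := fun i => (dirichletLap B W)⁻¹ i j)
    (by rw [mulVec_zero, dirichletLap_mulVec_inv_col hW]; exact Pi.single_nonneg.2 zero_le_one)
  exact this i

theorem isSymm_dirichletLap : (dirichletLap B W).IsSymm := by
  ext x y
  simp only [transpose_apply, dirichletLap, eq_comm, abs_sub_comm (x : ℤ)]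

variable (B W) in
def poissonKernel (i : B) (x : ℤ) : ℝ :=
  ∑ y : B, if 0 < |x - (y : ℤ)| ∧ |x - (y : ℤ)| ≤ (W : ℤ) then (dirichletLap B W)⁻¹ i y else 0

theorem poissonKernel_le_one (hW : 1 ≤ W) {x : ℤ} (hx : x ∉ B) (i : B) :
    poissonKernel B W i x ≤ 1 := by
  set M := dirichletLap B W
  have hexit : ∀ y : B, (if 0 < |x - (y : ℤ)| ∧ |x - (y : ℤ)| ≤ (W : ℤ) then 1 else 0) ≤
      (M *ᵥ fun _ => 1) y := by
    intro y
    rw [dirichletLap_mulVec, bandLap, zeroExt_coe]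
    have hterm : ∀ z ∈ nbhd W y, 0 ≤ (1 : ℝ) - zeroExt (fun _ : B => (1 : ℝ)) z := fun z _ => by
      unfold zeroExt
      split_ifs <;> norm_num
    split_ifs with hxy
    · simpa only [zeroExt_of_notMem _ hx, sub_zero] using single_le_sum hterm (mem_nbhd.2 hxy)
    · exact sum_nonneg hterm
  calc poissonKernel B W i x
      = ∑ y, M⁻¹ i y * if 0 < |x - (y : ℤ)| ∧ |x - (y : ℤ)| ≤ (W : ℤ) then 1 else 0 := by
        simp only [poissonKernel, mul_ite, mul_one, mul_zero, M]
    _ ≤ ∑ y, M⁻¹ i y * (M *ᵥ fun _ => 1) y :=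
        sum_le_sum fun y _ => mul_le_mul_of_nonneg_left (hexit y) (dirichletLap_inv_nonneg hW i y)
    _ = (M⁻¹ *ᵥ M *ᵥ fun _ => 1) i := rfl
    _ = 1 := by rw [mulVec_mulVec, nonsing_inv_mul _ (isUnit_det_dirichletLap hW), one_mulVec]

end DirichletLaplacian

section Tent

theorem mul_sub_one_nonneg (W : ℕ) : 0 ≤ (W : ℤ) * (W - 1) := by
  rcases W with _ | W
  · simp
  · push_cast; nlinarith

theorem sum_nbhd_abs_sub_le (W : ℕ) {y ξ : ℤ} (hy : y ≠ ξ) :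
    ∑ z ∈ nbhd W y, (|z - ξ| - |y - ξ|) ≤ if |y - ξ| ≤ W then (W : ℤ) * (W - 1) else 0 := by
  induction W with
  | zero => simp [nbhd]
  | succ W ih =>
    rw [sum_nbhd_succ]
    have hstep : |y + (W + 1) - ξ| - |y - ξ| + (|y - (W + 1) - ξ| - |y - ξ|) ≤
        if |y - ξ| ≤ W + 1 then 2 * (W : ℤ) else 0 := by
      rcases abs_cases (y - ξ) with ⟨h₀, _⟩ | ⟨h₀, _⟩ <;>
        rcases abs_cases (y + (W + 1) - ξ) with ⟨hp, _⟩ | ⟨hp, _⟩ <;>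
        rcases abs_cases (y - (W + 1) - ξ) with ⟨hm, _⟩ | ⟨hm, _⟩ <;>
        split_ifs <;> omega
    have := mul_sub_one_nonneg W
    push_cast
    split_ifs at ih hstep ⊢ <;> linarith

def tent (ξ : ℤ) (R W : ℕ) (z : ℤ) : ℤ :=
  max (R + 1 - |z - ξ|) 0 + if z = ξ then (W : ℤ) * (W - 1) else 0

variable {ξ : ℤ} {R W : ℕ}

theorem tent_eq_zero {z : ℤ} (hz : R < |z - ξ|) : tent ξ R W z = 0 := by
  have hzξ : z ≠ ξ := fun h => by subst h; simp at hz; omega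
  simp only [tent, hzξ, if_false, add_zero]
  omega

theorem one_le_tent {z : ℤ} (hz : |z - ξ| ≤ R) : 1 ≤ tent ξ R W z := by
  have := mul_sub_one_nonneg W
  unfold tent
  split_ifs <;> omega

theorem bandLap_tent_le {y : ℤ} (hy : |y - ξ| ≤ R) :
    bandLap W (tent ξ R W) y ≤ if y = ξ then 2 * (W : ℤ) ^ 3 else 0 := by
  have hspike := mul_sub_one_nonneg W
  have hterm : ∀ z ∈ nbhd W y, tent ξ R W y - tent ξ R W z ≤ (|z - ξ| - |y - ξ|) +
      ((if y = ξ then (W : ℤ) * (W - 1) else 0) - if z = ξ then (W : ℤ) * (W - 1) else 0) :=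
    fun z _ => by
      have hz := le_max_left (R + 1 - |z - ξ|) 0
      simp only [tent, max_eq_left (show 0 ≤ R + 1 - |y - ξ| by omega)]
      linarith
  refine (sum_le_sum hterm).trans ?_
  split_ifs with hyξ
  · subst hyξ
    have hbound : ∀ z ∈ nbhd W y, (|z - y| - |y - y|) +
        ((W : ℤ) * (W - 1) - if z = y then (W : ℤ) * (W - 1) else 0) ≤ W + W * (W - 1) := by
      intro z hz
      obtain ⟨hpos, hle⟩ := mem_nbhd.1 hz
      have hzy : z ≠ y := fun h => by simp [h] at hpos
      simp only [hzy, if_false, sub_self, abs_zero]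
      linarith
    refine (sum_le_card_nsmul _ _ _ hbound).trans_eq ?_
    rw [card_nbhd, nsmul_eq_mul]
    push_cast
    ring
  · simp only [zero_sub, ← sub_eq_add_neg, sum_sub_distrib, sum_ite_eq']
    have hsum := sum_nbhd_abs_sub_le W hyξ
    rw [sum_sub_distrib] at hsum
    by_cases hnear : |y - ξ| ≤ W
    · have hξ : ξ ∈ nbhd W y := mem_nbhd.2 (by
        rw [abs_sub_comm]; exact ⟨abs_pos.2 (sub_ne_zero.2 hyξ), hnear⟩)
      simp only [hnear, hξ, if_true] at hsum ⊢
      linarith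
    · simp only [hnear, if_false] at hsum
      split_ifs <;> linarith

theorem tent_le_dirichletLap_inv (hW : 1 ≤ W) (c : ball ξ R) (hc : (c : ℤ) = ξ)
    (y : ball ξ R) :
    (tent ξ R W y : ℝ) ≤ 2 * W ^ 3 * (dirichletLap (ball ξ R) W)⁻¹ y c := by
  have hext : zeroExt (fun y : ball ξ R => (tent ξ R W y : ℝ)) = fun z => (tent ξ R W z : ℝ) := by
    funext z
    by_cases hz : z ∈ ball ξ R
    · exact zeroExt_coe _ ⟨z, hz⟩
    · rw [zeroExt_of_notMem _ hz, tent_eq_zero (not_le.1 fun h => hz (mem_ball.2 h))]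
      simp
  refine le_of_dirichletLap_mulVec_le hW (u := fun y => (tent ξ R W y : ℝ))
    (v := (2 * W ^ 3 : ℝ) • fun y => (dirichletLap (ball ξ R) W)⁻¹ y c) (fun y => ?_) y
  have hlap := bandLap_tent_le (W := W) (mem_ball.1 y.2)
  have hyc : (y : ℤ) = ξ ↔ y = c := by rw [← Subtype.coe_inj, hc]
  rw [dirichletLap_mulVec, hext, mulVec_smul, dirichletLap_mulVec_inv_col hW]
  simp only [bandLap, ← Int.cast_sub, ← Int.cast_sum] at hlap ⊢
  simp only [hyc] at hlap
  rw [Pi.smul_apply, Pi.single_apply, smul_eq_mul]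
  split_ifs at hlap ⊢ <;> simpa using (Int.cast_le (R := ℝ)).2 hlap

theorem one_div_le_poissonKernel (hW : 1 ≤ W) (c : ball ξ R) (hc : (c : ℤ) = ξ)
    {x : ℤ} (hx₁ : R < |x - ξ|) (hx₂ : |x - ξ| ≤ R + W) :
    1 / (2 * W ^ 3) ≤ poissonKernel (ball ξ R) W c x := by
  set b := max (ξ - R) (min x (ξ + R))
  have hbB : b ∈ ball ξ R := by rw [ball, mem_Icc]; omega
  have hbx : 0 < |x - b| ∧ |x - b| ≤ W := by
    rcases abs_cases (x - ξ) with ⟨h, _⟩ | ⟨h, _⟩ <;>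
      rcases abs_cases (x - b) with ⟨h', _⟩ | ⟨h', _⟩ <;> omega
  have hGb : 1 / (2 * W ^ 3) ≤ (dirichletLap (ball ξ R) W)⁻¹ c ⟨b, hbB⟩ := by
    rw [isSymm_dirichletLap.inv.apply, div_le_iff₀' (by positivity)]
    exact le_trans (by exact_mod_cast one_le_tent (mem_ball.1 hbB))
      (tent_le_dirichletLap_inv hW c hc ⟨b, hbB⟩)
  refine hGb.trans ?_
  unfold poissonKernel
  have := single_le_sum (s := univ)
    (f := fun y : ball ξ R => if 0 < |x - (y : ℤ)| ∧ |x - (y : ℤ)| ≤ (W : ℤ) then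
      (dirichletLap (ball ξ R) W)⁻¹ c y else 0)
    (fun y _ => by split_ifs; exacts [dirichletLap_inv_nonneg hW c y, le_rfl]) (mem_univ ⟨b, hbB⟩)
  simpa only [hbx, and_self, if_true] using this

end Tent

end

theorem bandPoisson_eq (ξ : ℤ) (r W : ℕ) (x : ℤ) :
    bandPoisson ξ r W x = poissonKernel (ball ξ (r * W)) W (bandCtr ξ r W) x := rfl

theorem band1d_poisson_general (W r : ℕ) (hW : 1 ≤ W) (ξ x : ℤ)
    (hx₁ : ((r * W : ℕ) : ℤ) < |x - ξ|) (hx₂ : |x - ξ| ≤ (((r + 1) * W : ℕ) : ℤ)) :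
    1 / (2 * (W : ℝ) ^ 3) ≤ bandPoisson ξ r W x ∧ bandPoisson ξ r W x ≤ 1 := by
  have hx₂' : |x - ξ| ≤ (r * W : ℕ) + W := by push_cast at hx₂ ⊢; linarith
  rw [bandPoisson_eq]
  exact ⟨one_div_le_poissonKernel hW (bandCtr ξ r W) rfl hx₁ hx₂',
    poissonKernel_le_one hW (fun h => (mem_ball.1 h).not_gt hx₁) _⟩

/-- **Poisson kernel bounds for the 1D band model** (second part of Lemma B.1):
for every `x` in the exterior boundary `∂B_r(ξ) = {x : rW < |x-ξ| ≤ (r+1)W}`,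
`1/(2W³) ≤ P_r(ξ,x) ≤ 1`. -/
theorem band1d_poisson (W r : ℕ) (hW : 1 ≤ W) (hr : 1 ≤ r) (ξ x : ℤ)
    (hx₁ : ((r * W : ℕ) : ℤ) < |x - ξ|) (hx₂ : |x - ξ| ≤ (((r + 1) * W : ℕ) : ℤ)) :
    1 / (2 * (W : ℝ) ^ 3) ≤ bandPoisson ξ r W x ∧ bandPoisson ξ r W x ≤ 1 :=
  band1d_poisson_general W r hW ξ x hx₁ hx₂

end Band1D
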